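/- arXiv:math/0507430 — 2 statements merged into one kernel-verified Lean document; each statement's English description precedes it below -/
import Mathlib

section
/- Let A_n = C(2n,n) * (sum over k = 0..n of C(n,k)^4). Then, with the convention A_m = 0 for m < 0, for every integer n ≥ 1 one has n^4·A_n = 4(2n−1)^2(3n^2−3n+1)·A_{n−1} + 16(2n−1)(2n−3)(4n−3)(4n−5)·A_{n−2}. (Equivalently, Σ A_n z^n is the analytic solution of θ^4 − 4z(2θ+1)^2(3θ^2+3θ+1) − 4z^2(4θ+2)(4θ+3)(4θ+5)(4θ+6), case #18 of the table.) -/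
open Finset

/-- Zeilberger certificate polynomial for the sum `∑ C(n,k)^4`. -/
def Pq (N K : ℚ) : ℚ :=
  (-35*N^3+170*N^4-310*N^5+250*N^6-75*N^7)
  + (84*N^2-456*N^3+916*N^4-804*N^5+260*N^6)*K
  + (-70*N+460*N^2-1068*N^3+1052*N^4-374*N^5)*K^2
  + (20-200*N+592*N^2-688*N^3+276*N^4)*K^3
  + (30-148*N+222*N^2-104*N^3)*K^4
  + (12-28*N+16*N^2)*K^5

/-- The telescoping companion `G(n,k) = P(n,k)·C(n-1,k-1)^4`, with `n = m+2`. -/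
def gW (m : ℕ) : ℕ → ℚ
  | 0 => 0
  | (j+1) => Pq ((m:ℚ)+2) ((j:ℚ)+1) * (((m+1).choose j : ℕ) : ℚ)^4

lemma gch (n k : ℕ) : (n+1) * Nat.choose n k = Nat.choose (n+1) k * (n+1-k) := by
  rw [← Nat.choose_succ_right_eq]
  exact Nat.add_one_mul_choose_eq n k

lemma perterm (m k : ℕ) (hk : k ≤ m + 2) :
    ((m:ℚ)+1)^4 * ( ((m:ℚ)+2)^3 * (((m+2).choose k : ℕ):ℚ)^4
      - 2*(2*(m:ℚ)+3)*(3*((m:ℚ)+2)^2-3*((m:ℚ)+2)+1) * (((m+1).choose k : ℕ):ℚ)^4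
      - 4*((m:ℚ)+1)*(4*(m:ℚ)+5)*(4*(m:ℚ)+3) * ((m.choose k : ℕ):ℚ)^4 )
    = gW m (k+1) - gW m k := by
  match k with
  | 0 =>
    simp only [gW, Nat.choose_zero_right, Nat.cast_one, Nat.cast_zero, Pq]
    ring
  | (j+1) =>
    rcases (by omega : j + 1 ≤ m ∨ j + 1 = m + 1 ∨ j + 1 = m + 2) with hj | hj | hj
    · -- interior case
      obtain ⟨d, rfl⟩ : ∃ d, m = j + 1 + d := ⟨m - (j+1), by omega⟩
      have f1 := gch (j+1+d+1) (j+1)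
      have f2 := gch (j+1+d) (j+1)
      have f3 := Nat.choose_succ_right_eq (j+1+d+1) j
      rw [show j+1+d+1+1-(j+1) = d+2 by omega] at f1
      rw [show j+1+d+1-(j+1) = d+1 by omega] at f2
      rw [show j+1+d+1-j = d+2 by omega] at f3
      rw [show j+1+d+1+1 = j+1+d+2 by omega] at f1
      have q1 : ((j:ℚ)+1+(d:ℚ)+2) * (((j+1+d+1).choose (j+1) : ℕ):ℚ)
          = (((j+1+d+2).choose (j+1) : ℕ):ℚ) * ((d:ℚ)+2) := by exact_mod_cast f1
      have q2 : ((j:ℚ)+1+(d:ℚ)+1) * (((j+1+d).choose (j+1) : ℕ):ℚ)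
          = (((j+1+d+1).choose (j+1) : ℕ):ℚ) * ((d:ℚ)+1) := by exact_mod_cast f2
      have q3 : (((j+1+d+1).choose (j+1) : ℕ):ℚ) * ((j:ℚ)+1)
          = (((j+1+d+1).choose j : ℕ):ℚ) * ((d:ℚ)+2) := by exact_mod_cast f3
      have hd2 : ((d:ℚ)+2) ≠ 0 := by positivity
      have hjd : ((j:ℚ)+1+(d:ℚ)+1) ≠ 0 := by positivity
      have hx : (((j+1+d+2).choose (j+1) : ℕ):ℚ)
          = ((j:ℚ)+1+(d:ℚ)+2) * (((j+1+d+1).choose (j+1) : ℕ):ℚ) / ((d:ℚ)+2) := by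
        rw [eq_div_iff hd2]; linear_combination -q1
      have hz : (((j+1+d).choose (j+1) : ℕ):ℚ)
          = (((j+1+d+1).choose (j+1) : ℕ):ℚ) * ((d:ℚ)+1) / ((j:ℚ)+1+(d:ℚ)+1) := by
        rw [eq_div_iff hjd]; linear_combination q2
      have hw : (((j+1+d+1).choose j : ℕ):ℚ)
          = (((j+1+d+1).choose (j+1) : ℕ):ℚ) * ((j:ℚ)+1) / ((d:ℚ)+2) := by
        rw [eq_div_iff hd2]; linear_combination -q3
      simp only [gW, show j+1+d+2 = (j+1+d+1)+1 by omega]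
      rw [show (j+1+d+1)+1 = j+1+d+2 by omega] at *
      rw [hx, hz, hw, Pq, Pq]
      push_cast
      field_simp
      ring
    · -- k = m+1
      obtain rfl : j = m := by omega
      have hx : (j+2).choose (j+1) = j+2 := by
        rw [show j+2 = (j+1)+1 by omega, Nat.choose_succ_self_right]
      have hw : (j+1).choose j = j+1 := Nat.choose_succ_self_right j
      have hz : j.choose (j+1) = 0 := Nat.choose_eq_zero_of_lt (by omega)
      simp only [gW, hx, hw, hz, Nat.choose_self, Pq]
      push_cast
      ring
    · -- k = m+2
      obtain ⟨i, rfl⟩ : ∃ i, j = i + 1 := ⟨j - 1, by omega⟩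
      obtain rfl : i = m := by omega
      have h1 : (i+1).choose (i+1+1) = 0 := Nat.choose_eq_zero_of_lt (by omega)
      have h2 : i.choose (i+1+1) = 0 := Nat.choose_eq_zero_of_lt (by omega)
      have h3 : (i+2).choose (i+1+1) = 1 := by
        rw [show i+1+1 = i+2 by omega, Nat.choose_self]
      simp only [gW, h1, h2, h3, Nat.choose_self, Pq]
      push_cast
      ring

lemma inner_rec (m : ℕ) :
    ((m:ℚ)+2)^3 * (∑ k ∈ range (m+3), (((m+2).choose k : ℕ):ℚ)^4)
    = 2*(2*(m:ℚ)+3)*(3*((m:ℚ)+2)^2-3*((m:ℚ)+2)+1)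
        * (∑ k ∈ range (m+2), (((m+1).choose k : ℕ):ℚ)^4)
      + 4*((m:ℚ)+1)*(4*(m:ℚ)+5)*(4*(m:ℚ)+3)
        * (∑ k ∈ range (m+1), ((m.choose k : ℕ):ℚ)^4) := by
  have tel := Finset.sum_range_sub (gW m) (m+3)
  have h0 : ∑ k ∈ range (m+3),
      ((m:ℚ)+1)^4 * ( ((m:ℚ)+2)^3 * (((m+2).choose k : ℕ):ℚ)^4
        - 2*(2*(m:ℚ)+3)*(3*((m:ℚ)+2)^2-3*((m:ℚ)+2)+1) * (((m+1).choose k : ℕ):ℚ)^4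
        - 4*((m:ℚ)+1)*(4*(m:ℚ)+5)*(4*(m:ℚ)+3) * ((m.choose k : ℕ):ℚ)^4 ) = 0 := by
    rw [Finset.sum_congr rfl (fun k hk => perterm m k (by
      have := Finset.mem_range.mp hk; omega)), tel]
    simp [gW, Nat.choose_eq_zero_of_lt (by omega : m+1 < m+2)]
  rw [← Finset.mul_sum] at h0
  have h1 := (mul_eq_zero.mp h0).resolve_left (by positivity)
  simp only [Finset.sum_sub_distrib, ← Finset.mul_sum] at h1
  have e1 : ∑ k ∈ range (m+3), (((m+1).choose k : ℕ):ℚ)^4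
      = ∑ k ∈ range (m+2), (((m+1).choose k : ℕ):ℚ)^4 := by
    rw [show m+3 = (m+2)+1 by omega, Finset.sum_range_succ,
      Nat.choose_eq_zero_of_lt (by omega : m+1 < m+2)]
    norm_num
  have e0 : ∑ k ∈ range (m+3), ((m.choose k : ℕ):ℚ)^4
      = ∑ k ∈ range (m+1), ((m.choose k : ℕ):ℚ)^4 := by
    rw [show m+3 = (m+1)+1+1 by omega, Finset.sum_range_succ, Finset.sum_range_succ,
      Nat.choose_eq_zero_of_lt (by omega : m < m+1),
      Nat.choose_eq_zero_of_lt (by omega : m < m+1+1)]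
    norm_num
  rw [e1, e0] at h1
  linarith [h1]

lemma cbQ (p : ℕ) : ((p:ℚ)+1) * (((2*(p+1)).choose (p+1) : ℕ):ℚ)
    = 2*(2*(p:ℚ)+1) * (((2*p).choose p : ℕ):ℚ) := by
  have h := Nat.succ_mul_centralBinom_succ p
  rw [Nat.centralBinom_eq_two_mul_choose, Nat.centralBinom_eq_two_mul_choose] at h
  have h' : ((p+1) * ((2*(p+1)).choose (p+1)) : ℚ) = ((2*(2*p+1) * ((2*p).choose p)) : ℚ) := by
    exact_mod_cast congrArg (Nat.cast : ℕ → ℚ) h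
  push_cast at h'
  linear_combination h'

/-- Case #18: A_n = C(2n,n) * ∑_{k=0}^n C(n,k)^4 satisfies the recurrence of
θ^4 − 4z(2θ+1)^2(3θ^2+3θ+1) − 4z^2(4θ+2)(4θ+3)(4θ+5)(4θ+6). -/
theorem stmt_4
    (A : ℤ → ℤ)
    (hneg : ∀ m : ℤ, m < 0 → A m = 0)
    (hA : ∀ n : ℕ, A (n : ℤ) =
      (Nat.choose (2 * n) n : ℤ) * ∑ k ∈ Finset.range (n + 1), ((n.choose k : ℤ)) ^ 4) :
    ∀ n : ℤ, 1 ≤ n →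
      n ^ 4 * A n =
        4 * (2 * n - 1) ^ 2 * (3 * n ^ 2 - 3 * n + 1) * A (n - 1) +
          16 * (2 * n - 1) * (2 * n - 3) * (4 * n - 3) * (4 * n - 5) * A (n - 2) := by
  intro n hn
  lift n to ℕ using by linarith
  match n with
  | 0 => norm_num at hn
  | 1 =>
    have h1 := hA 1
    have h0 := hA 0
    have hm := hneg (-1) (by norm_num)
    norm_num [Finset.sum_range_succ] at h1 h0
    norm_num [h1, h0]
    exact hm
  | (p+2) =>
    have e1 : ((p+2:ℕ):ℤ) - 1 = ((p+1:ℕ):ℤ) := by push_cast; ring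
    have e2 : ((p+2:ℕ):ℤ) - 2 = ((p:ℕ):ℤ) := by push_cast; ring
    rw [e1, e2, hA, hA, hA]
    have key := inner_rec p
    have c2 := cbQ (p+1)
    have c1 := cbQ p
    rw [show p+1+1 = p+2 by omega, show 2*(p+1+1) = 2*(p+2) by omega] at c2
    push_cast at c2
    have final :
        ((p:ℚ)+2)^4 * ((((2*(p+2)).choose (p+2) : ℕ):ℚ)
            * ∑ k ∈ range (p+2+1), (((p+2).choose k : ℕ):ℚ)^4)
        = 4*(2*((p:ℚ)+2)-1)^2*(3*((p:ℚ)+2)^2-3*((p:ℚ)+2)+1)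
            * ((((2*(p+1)).choose (p+1) : ℕ):ℚ)
              * ∑ k ∈ range (p+1+1), (((p+1).choose k : ℕ):ℚ)^4)
          + 16*(2*((p:ℚ)+2)-1)*(2*((p:ℚ)+2)-3)*(4*((p:ℚ)+2)-3)*(4*((p:ℚ)+2)-5)
            * ((((2*p).choose p : ℕ):ℚ)
              * ∑ k ∈ range (p+1), ((p.choose k : ℕ):ℚ)^4) := by
      rw [show p+2+1 = p+3 by omega]
      linear_combination
        (((p:ℚ)+2)^3 * (∑ k ∈ range (p+3), (((p+2).choose k : ℕ):ℚ)^4)) * c2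
        + (2*(2*(p:ℚ)+3) * (((2*(p+1)).choose (p+1) : ℕ):ℚ)) * key
        + (8*(2*(p:ℚ)+3)*(4*(p:ℚ)+5)*(4*(p:ℚ)+3)
            * (∑ k ∈ range (p+1), ((p.choose k : ℕ):ℚ)^4)) * c1
    exact_mod_cast final
end

section
/- Let A_n = C(2n,n)^2 * (sum over k = 0..n of C(n,k)^3), i.e. the squared central binomial coefficient times the n-th Franel number. Then, with the convention A_m = 0 for m < 0, for every integer n ≥ 1 one has n^4·A_n = 4(2n−1)^2(7n^2−7n+2)·A_{n−1} + 128(2n−1)^2(2n−3)^2·A_{n−2}. (Equivalently, Σ A_n z^n is the analytic solution of θ^4 − 4z(2θ+1)^2(7θ^2+7θ+2) − 2^7 z^2(2θ+1)^2(2θ+3)^2, case #45 of the table.) -/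
open Finset

/-- ratio relation in the top index, valid for all k. -/
private lemma keyA (m k : ℕ) :
    ((m : ℤ) + 1) * (m.choose k : ℤ) = ((m : ℤ) + 1 - k) * ((m + 1).choose k : ℤ) := by
  rcases le_or_gt k (m + 1) with h | h
  · have h0 := Nat.choose_mul_succ_eq m k
    have h0' := congrArg (Nat.cast : ℕ → ℤ) h0
    push_cast [Nat.cast_sub h] at h0'
    linarith [h0']
  · have e1 : m.choose k = 0 := Nat.choose_eq_zero_of_lt (by omega)
    have e2 : (m + 1).choose k = 0 := Nat.choose_eq_zero_of_lt h
    simp [e1, e2]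

/-- ratio relation in the bottom index, valid for all k. -/
private lemma keyB (m k : ℕ) :
    ((k : ℤ) + 1) * (m.choose (k + 1) : ℤ) = ((m : ℤ) - k) * (m.choose k : ℤ) := by
  rcases le_or_gt k m with h | h
  · have h0 := Nat.choose_succ_right_eq m k
    have h0' := congrArg (Nat.cast : ℕ → ℤ) h0
    push_cast [Nat.cast_sub h] at h0'
    linarith [h0']
  · have e1 : m.choose k = 0 := Nat.choose_eq_zero_of_lt h
    have e2 : m.choose (k + 1) = 0 := Nat.choose_eq_zero_of_lt (by omega)
    simp [e1, e2]

/-- the WZ certificate function for the Franel recurrence. -/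
private def Hf (n k : ℕ) : ℤ :=
  (k : ℤ) ^ 3 *
    (4 * (k : ℤ) ^ 3 - 6 * (3 * (n : ℤ) + 5) * (k : ℤ) ^ 2 +
      3 * ((n : ℤ) + 2) * (9 * (n : ℤ) + 13) * (k : ℤ) -
      2 * ((n : ℤ) + 2) ^ 2 * (7 * (n : ℤ) + 9)) *
    ((n + 2).choose k : ℤ) ^ 3

private lemma step (n k : ℕ) :
    ((n : ℤ) + 1) * ((n : ℤ) + 2) ^ 3 *
      (((n : ℤ) + 2) ^ 2 * ((n + 2).choose k : ℤ) ^ 3 -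
        (7 * (n : ℤ) ^ 2 + 21 * (n : ℤ) + 16) * ((n + 1).choose k : ℤ) ^ 3 -
        8 * ((n : ℤ) + 1) ^ 2 * (n.choose k : ℤ) ^ 3) =
      Hf n (k + 1) - Hf n k := by
  have h1 := keyB (n + 2) k
  have h2 := keyA (n + 1) k
  have h3 := keyA n k
  push_cast at h1 h2 h3
  have h1c : (((k : ℤ) + 1)) ^ 3 * ((n + 2).choose (k + 1) : ℤ) ^ 3 =
      ((n : ℤ) + 2 - k) ^ 3 * ((n + 2).choose k : ℤ) ^ 3 := by
    rw [← mul_pow, ← mul_pow, h1]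
  have h2x : ((n : ℤ) + 2) * ((n + 1).choose k : ℤ) =
      ((n : ℤ) + 2 - k) * ((n + 2).choose k : ℤ) := by
    rw [show n + 1 + 1 = n + 2 from rfl] at h2
    linear_combination h2
  have h2c : (((n : ℤ) + 2)) ^ 3 * ((n + 1).choose k : ℤ) ^ 3 =
      ((n : ℤ) + 2 - k) ^ 3 * ((n + 2).choose k : ℤ) ^ 3 := by
    rw [← mul_pow, ← mul_pow, h2x]
  have h3c : (((n : ℤ) + 1)) ^ 3 * (n.choose k : ℤ) ^ 3 =
      ((n : ℤ) + 1 - k) ^ 3 * ((n + 1).choose k : ℤ) ^ 3 := by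
    rw [← mul_pow, ← mul_pow, h3]
  unfold Hf
  push_cast
  linear_combination
    (-(4 * ((k : ℤ) + 1) ^ 3 - 6 * (3 * (n : ℤ) + 5) * ((k : ℤ) + 1) ^ 2 +
        3 * ((n : ℤ) + 2) * (9 * (n : ℤ) + 13) * ((k : ℤ) + 1) -
        2 * ((n : ℤ) + 2) ^ 2 * (7 * (n : ℤ) + 9))) * h1c +
    (-(((n : ℤ) + 1) * (7 * (n : ℤ) ^ 2 + 21 * (n : ℤ) + 16)) - 8 * ((n : ℤ) + 1 - k) ^ 3) * h2c +
    (-8 * ((n : ℤ) + 2) ^ 3) * h3c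

/-- the Franel recurrence. -/
private lemma franel (n : ℕ) :
    ((n : ℤ) + 2) ^ 2 * ∑ k ∈ Finset.range (n + 3), (((n + 2).choose k : ℤ)) ^ 3 =
      (7 * (n : ℤ) ^ 2 + 21 * (n : ℤ) + 16) *
          ∑ k ∈ Finset.range (n + 2), (((n + 1).choose k : ℤ)) ^ 3 +
        8 * ((n : ℤ) + 1) ^ 2 * ∑ k ∈ Finset.range (n + 1), ((n.choose k : ℤ)) ^ 3 := by
  have e1 : ∑ k ∈ Finset.range (n + 3), (((n + 1).choose k : ℤ)) ^ 3 =
      ∑ k ∈ Finset.range (n + 2), (((n + 1).choose k : ℤ)) ^ 3 := by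
    rw [Finset.sum_range_succ, Nat.choose_eq_zero_of_lt (by omega)]
    simp
  have e2 : ∑ k ∈ Finset.range (n + 3), ((n.choose k : ℤ)) ^ 3 =
      ∑ k ∈ Finset.range (n + 1), ((n.choose k : ℤ)) ^ 3 := by
    rw [Finset.sum_range_succ, Finset.sum_range_succ,
      Nat.choose_eq_zero_of_lt (by omega), Nat.choose_eq_zero_of_lt (by omega)]
    simp
  have tele : ∑ k ∈ Finset.range (n + 3), (Hf n (k + 1) - Hf n k) = Hf n (n + 3) - Hf n 0 :=
    Finset.sum_range_sub (Hf n) (n + 3)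
  have hend : Hf n (n + 3) = 0 := by
    unfold Hf
    rw [Nat.choose_eq_zero_of_lt (by omega)]
    simp
  have h0 : Hf n 0 = 0 := by unfold Hf; simp
  have key : ((n : ℤ) + 1) * ((n : ℤ) + 2) ^ 3 *
      (((n : ℤ) + 2) ^ 2 * ∑ k ∈ Finset.range (n + 3), (((n + 2).choose k : ℤ)) ^ 3 -
        (7 * (n : ℤ) ^ 2 + 21 * (n : ℤ) + 16) *
          ∑ k ∈ Finset.range (n + 2), (((n + 1).choose k : ℤ)) ^ 3 -
        8 * ((n : ℤ) + 1) ^ 2 * ∑ k ∈ Finset.range (n + 1), ((n.choose k : ℤ)) ^ 3) = 0 := by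
    rw [← e1, ← e2]
    calc ((n : ℤ) + 1) * ((n : ℤ) + 2) ^ 3 *
        (((n : ℤ) + 2) ^ 2 * ∑ k ∈ Finset.range (n + 3), (((n + 2).choose k : ℤ)) ^ 3 -
          (7 * (n : ℤ) ^ 2 + 21 * (n : ℤ) + 16) *
            ∑ k ∈ Finset.range (n + 3), (((n + 1).choose k : ℤ)) ^ 3 -
          8 * ((n : ℤ) + 1) ^ 2 * ∑ k ∈ Finset.range (n + 3), ((n.choose k : ℤ)) ^ 3)
        = ∑ k ∈ Finset.range (n + 3),
            ((n : ℤ) + 1) * ((n : ℤ) + 2) ^ 3 *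
              (((n : ℤ) + 2) ^ 2 * ((n + 2).choose k : ℤ) ^ 3 -
                (7 * (n : ℤ) ^ 2 + 21 * (n : ℤ) + 16) * ((n + 1).choose k : ℤ) ^ 3 -
                8 * ((n : ℤ) + 1) ^ 2 * (n.choose k : ℤ) ^ 3) := by
          rw [Finset.mul_sum, Finset.mul_sum, Finset.mul_sum,
            ← Finset.sum_sub_distrib, ← Finset.sum_sub_distrib, Finset.mul_sum]
      _ = ∑ k ∈ Finset.range (n + 3), (Hf n (k + 1) - Hf n k) :=
          Finset.sum_congr rfl fun k _ => step n k
      _ = 0 := by rw [tele, hend, h0]; norm_num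
  have hne : ((n : ℤ) + 1) * ((n : ℤ) + 2) ^ 3 ≠ 0 := by positivity
  rcases mul_eq_zero.mp key with h | h
  · exact absurd h hne
  · linarith

/-- squared central binomial recurrence. -/
private lemma cb (m : ℕ) :
    ((m : ℤ) + 1) ^ 2 * (((2 * (m + 1)).choose (m + 1) : ℤ)) ^ 2 =
      4 * (2 * (m : ℤ) + 1) ^ 2 * (((2 * m).choose m : ℤ)) ^ 2 := by
  have h := Nat.succ_mul_centralBinom_succ m
  simp only [Nat.centralBinom] at h
  have h' := congrArg (Nat.cast : ℕ → ℤ) h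
  push_cast at h'
  linear_combination (((m : ℤ) + 1) * (((2 * (m + 1)).choose (m + 1) : ℤ)) +
    2 * (2 * (m : ℤ) + 1) * (((2 * m).choose m : ℤ))) * h'

/-- Case #45: A_n = C(2n,n)^2 times the n-th Franel number ∑_{k=0}^n C(n,k)^3 satisfies
the recurrence of θ^4 − 4z(2θ+1)^2(7θ^2+7θ+2) − 2^7 z^2(2θ+1)^2(2θ+3)^2. -/
theorem stmt_13
    (A : ℤ → ℤ)
    (hneg : ∀ m : ℤ, m < 0 → A m = 0)
    (hA : ∀ n : ℕ, A (n : ℤ) =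
      (Nat.choose (2 * n) n : ℤ) ^ 2 *
        ∑ k ∈ Finset.range (n + 1), ((n.choose k : ℤ)) ^ 3) :
    ∀ n : ℤ, 1 ≤ n →
      n ^ 4 * A n =
        4 * (2 * n - 1) ^ 2 * (7 * n ^ 2 - 7 * n + 2) * A (n - 1) +
          128 * (2 * n - 1) ^ 2 * (2 * n - 3) ^ 2 * A (n - 2) := by
  intro n hn
  rcases eq_or_lt_of_le hn with h1 | h2
  · -- n = 1
    have hA0 := hA 0
    have hA1 := hA 1
    have hAm : A (-1) = 0 := hneg (-1) (by norm_num)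
    norm_num [Finset.sum_range_succ] at hA0 hA1
    rw [← h1]
    norm_num [hA0, hA1, hAm]
  · -- n ≥ 2
    obtain ⟨m, hn2⟩ : ∃ m : ℕ, n = (m : ℤ) + 2 := ⟨(n - 2).toNat, by omega⟩
    subst hn2
    have ha2 := hA (m + 2)
    have ha1 := hA (m + 1)
    have ha0 := hA m
    have hfr := franel m
    have hcb2 := cb (m + 1)
    have hcb1 := cb m
    push_cast at ha2 ha1 ha0 hcb2 hcb1
    have hidx2 : m + 1 + 1 = m + 2 := rfl
    have hidx3 : m + 2 + 1 = m + 3 := rfl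
    rw [hidx2] at hcb2
    rw [hidx3] at ha2
    have g1 : ((m : ℤ) + 2) - 1 = ((m : ℤ) + 1) := by ring
    have g2 : ((m : ℤ) + 2) - 2 = (m : ℤ) := by ring
    rw [g1, g2, ha2, ha1, ha0]
    linear_combination
      (((m : ℤ) + 2) ^ 2 * ∑ k ∈ Finset.range (m + 3), (((m + 2).choose k : ℤ)) ^ 3) * hcb2 +
      (4 * (2 * (m : ℤ) + 3) ^ 2 * (((2 * (m + 1)).choose (m + 1) : ℤ)) ^ 2) * hfr +
      (32 * (2 * (m : ℤ) + 3) ^ 2 * ∑ k ∈ Finset.range (m + 1), ((m.choose k : ℤ)) ^ 3) * hcb1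
end
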